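/- Let {G_β^α : α, β ∈ ℤ} be a bidirect system of complex vector spaces (inverse system in the lower index β, direct system in the upper index α, all squares commuting) such that dim_ℂ G_β^α ≤ C for a constant C independent of α, β. For fixed β set G_β = colim_α G_β^α with canonical maps κ_β^α : G_β^α → G_β, and let Ker_β^α = ker κ_β^α and coKer_β^α = coker κ_β^α, which inherit bidirect-system structures. Then there is an exact sequence of complex vector spaces 0 → colim_α lim_β Ker_β^α → colim_α lim_β G_β^α → lim_β colim_α G_β^α → colim_α lim_β coKer_β^α → 0, in which the middle map is the canonical interchange map κ. -/

import Mathlib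

/-- A bidirect system of complex vector spaces indexed by `ℤ`: for each fixed lower index `β`
a direct system in the upper index `α`, for each fixed `α` an inverse system in `β`, with all
squares commuting. -/
structure BidirectSystem where
  /-- the spaces `G_β^α` (first index `α`, second index `β`) -/
  G : ℤ → ℤ → Type
  [acg : ∀ α β, AddCommGroup (G α β)]
  [mod : ∀ α β, Module ℂ (G α β)]
  /-- the direct-system maps raising the upper index -/
  ι : ∀ {α α' : ℤ}, α ≤ α' → ∀ β, G α β →ₗ[ℂ] G α' β
  /-- the inverse-system maps lowering the lower index -/
  π : ∀ (α : ℤ) {β β' : ℤ}, β ≤ β' → G α β' →ₗ[ℂ] G α β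
  ι_id : ∀ (α β : ℤ) (x : G α β), ι (le_refl α) β x = x
  ι_comp : ∀ {α α' α'' : ℤ} (h : α ≤ α') (h' : α' ≤ α'') (β : ℤ) (x : G α β),
    ι h' β (ι h β x) = ι (h.trans h') β x
  π_id : ∀ (α β : ℤ) (x : G α β), π α (le_refl β) x = x
  π_comp : ∀ (α : ℤ) {β β' β'' : ℤ} (h : β ≤ β') (h' : β' ≤ β'') (x : G α β''),
    π α h (π α h' x) = π α (h.trans h') x
  square : ∀ {α α' : ℤ} (h : α ≤ α') {β β' : ℤ} (h' : β ≤ β') (x : G α β'),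
    ι h β (π α h' x) = π α' h' (ι h β' x)

attribute [instance] BidirectSystem.acg BidirectSystem.mod

namespace BidirectSystem

variable (S : BidirectSystem)

/-- The direct system of `G_β^•` at fixed lower index `β`. -/
def fam (β : ℤ) : ∀ (a b : ℤ), a ≤ b → S.G a β →ₗ[ℂ] S.G b β := fun _ _ h => S.ι h β

/-- `colim_α G_β^α`. -/
def colimUpper (β : ℤ) : Type := Module.DirectLimit (fun α => S.G α β) (S.fam β)

noncomputable instance (β : ℤ) : AddCommGroup (S.colimUpper β) :=
  inferInstanceAs (AddCommGroup (Module.DirectLimit _ _))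

noncomputable instance (β : ℤ) : Module ℂ (S.colimUpper β) :=
  inferInstanceAs (Module ℂ (Module.DirectLimit _ _))

/-- The canonical map `G_β^α → colim_α G_β^α`. -/
noncomputable def toColim (α β : ℤ) : S.G α β →ₗ[ℂ] S.colimUpper β :=
  Module.DirectLimit.of ℂ ℤ (fun α => S.G α β) (S.fam β) α

/-- `lim_β G_β^α`: the coherent families in the product. -/
def lowerLim (α : ℤ) : Submodule ℂ (∀ β, S.G α β) where
  carrier := {g | ∀ (β β' : ℤ) (h : β ≤ β'), S.π α h (g β') = g β}
  add_mem' := by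
    intro x y hx hy β β' h
    simp only [Pi.add_apply, map_add, hx β β' h, hy β β' h]
  zero_mem' := by
    intro β β' h
    simp only [Pi.zero_apply, map_zero]
  smul_mem' := by
    intro c x hx β β' h
    simp only [Pi.smul_apply, map_smul, hx β β' h]

/-- The map `lim_β G_β^α → lim_β G_β^{α'}` induced by the `ι`. -/
noncomputable def lowerLimMap {α α' : ℤ} (h : α ≤ α') : S.lowerLim α →ₗ[ℂ] S.lowerLim α' where
  toFun g := ⟨fun β => S.ι h β (g.val β), by
    intro β β' h'
    rw [← S.square h h' (g.val β'), g.prop β β' h']⟩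
  map_add' g g' := by
    apply Subtype.ext
    funext β
    simp [map_add]
  map_smul' c g := by
    apply Subtype.ext
    funext β
    simp [map_smul]

/-- The map `colim_α G_{β'}^α → colim_α G_β^α` induced by the `π`. -/
noncomputable def colimUpperMap {β β' : ℤ} (h : β ≤ β') :
    S.colimUpper β' →ₗ[ℂ] S.colimUpper β :=
  Module.DirectLimit.lift ℂ ℤ (fun α => S.G α β') (S.fam β')
    (fun α => (S.toColim α β).comp (S.π α h))
    (by
      intro i j hij x
      show S.toColim j β (S.π j h (S.ι hij β' x)) = S.toColim i β (S.π i h x)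
      rw [← S.square hij h x]
      exact Module.DirectLimit.of_f (hij := hij))

/-- `lim_β colim_α G_β^α`. -/
noncomputable def limColim : Submodule ℂ (∀ β, S.colimUpper β) where
  carrier := {g | ∀ (β β' : ℤ) (h : β ≤ β'), S.colimUpperMap h (g β') = g β}
  add_mem' := by
    intro x y hx hy β β' h
    simp only [Pi.add_apply, map_add, hx β β' h, hy β β' h]
  zero_mem' := by
    intro β β' h
    simp only [Pi.zero_apply, map_zero]
  smul_mem' := by
    intro c x hx β β' h
    simp only [Pi.smul_apply, map_smul, hx β β' h]

/-- The map `lim_β G_β^α → lim_β colim_α G_β^α`. -/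
noncomputable def lowerLimToLimColim (α : ℤ) : S.lowerLim α →ₗ[ℂ] S.limColim where
  toFun g := ⟨fun β => S.toColim α β (g.val β), by
    intro β β' h
    have h1 : S.colimUpperMap h (S.toColim α β' (g.val β')) =
        (S.toColim α β) (S.π α h (g.val β')) :=
      Module.DirectLimit.lift_of _ _ _
    rw [h1, g.prop β β' h]⟩
  map_add' g g' := by
    apply Subtype.ext
    funext β
    simp [map_add]
  map_smul' c g := by
    apply Subtype.ext
    funext β
    simp [map_smul]

/-- The canonical interchange map `κ : colim_α lim_β G_β^α → lim_β colim_α G_β^α`. -/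
noncomputable def kappa :
    Module.DirectLimit (fun α => S.lowerLim α) (fun _ _ h => S.lowerLimMap h) →ₗ[ℂ]
      S.limColim :=
  Module.DirectLimit.lift ℂ ℤ (fun α => S.lowerLim α) (fun _ _ h => S.lowerLimMap h)
    (fun α => S.lowerLimToLimColim α)
    (by
      intro i j hij g
      apply Subtype.ext
      funext β
      simp only [lowerLimToLimColim, lowerLimMap, LinearMap.coe_mk, AddHom.coe_mk, toColim]
      exact Module.DirectLimit.of_f (hij := hij))

lemma colimUpperMap_of {α β β' : ℤ} (h : β ≤ β') (x : S.G α β') :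
    S.colimUpperMap h (S.toColim α β' x) = S.toColim α β (S.π α h x) :=
  Module.DirectLimit.lift_of _ _ _

lemma colimUpperMap_id (β : ℤ) (z : S.colimUpper β) :
    S.colimUpperMap (le_refl β) z = z := by
  refine Module.DirectLimit.induction_on z ?_
  intro α x
  show S.colimUpperMap (le_refl β) (S.toColim α β x) = S.toColim α β x
  refine (S.colimUpperMap_of (le_refl β) x).trans ?_
  exact congrArg (S.toColim α β) (S.π_id α β x)

lemma colimUpperMap_comp {β β' β'' : ℤ} (h : β ≤ β') (h' : β' ≤ β'') (z : S.colimUpper β'') :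
    S.colimUpperMap h (S.colimUpperMap h' z) = S.colimUpperMap (h.trans h') z := by
  refine Module.DirectLimit.induction_on z ?_
  intro α x
  show S.colimUpperMap h (S.colimUpperMap h' (S.toColim α β'' x)) =
    S.colimUpperMap (h.trans h') (S.toColim α β'' x)
  refine (congrArg (S.colimUpperMap h) (S.colimUpperMap_of h' x)).trans ?_
  refine (S.colimUpperMap_of h (S.π α h' x)).trans ?_
  refine (congrArg (S.toColim α β) (S.π_comp α h h' x)).trans ?_
  exact (S.colimUpperMap_of (h.trans h') x).symm

/-- `colim_α lim_β` of a bidirect system. -/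
noncomputable def colimLim (T : BidirectSystem) : Type :=
  Module.DirectLimit (fun α => T.lowerLim α) (fun _ _ h => T.lowerLimMap h)

noncomputable instance (T : BidirectSystem) : AddCommGroup (colimLim T) :=
  inferInstanceAs (AddCommGroup (Module.DirectLimit _ _))

noncomputable instance (T : BidirectSystem) : Module ℂ (colimLim T) :=
  inferInstanceAs (Module ℂ (Module.DirectLimit _ _))

/-- The bidirect system of kernels `Ker_β^α = ker (κ_β^α : G_β^α → colim_α G_β^α)`. -/
noncomputable def kerSystem (T : BidirectSystem) : BidirectSystem where
  G α β := LinearMap.ker (T.toColim α β)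
  ι {α α'} h β :=
    (T.ι h β).restrict (p := LinearMap.ker (T.toColim α β))
      (q := LinearMap.ker (T.toColim α' β)) (by
        intro x hx
        simp only [LinearMap.mem_ker] at hx ⊢
        have h1 : T.toColim α' β (T.ι h β x) = T.toColim α β x := Module.DirectLimit.of_f
        rw [h1, hx])
  π α {β β'} h :=
    (T.π α h).restrict (p := LinearMap.ker (T.toColim α β'))
      (q := LinearMap.ker (T.toColim α β)) (by
        intro x hx
        simp only [LinearMap.mem_ker] at hx ⊢
        rw [← T.colimUpperMap_of h x, hx, map_zero])
  ι_id := by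
    intro α β x
    apply Subtype.ext
    simp [LinearMap.restrict_apply, BidirectSystem.ι_id]
  ι_comp := by
    intro α α' α'' h h' β x
    apply Subtype.ext
    simp [LinearMap.restrict_apply, BidirectSystem.ι_comp]
  π_id := by
    intro α β x
    apply Subtype.ext
    simp [LinearMap.restrict_apply, BidirectSystem.π_id]
  π_comp := by
    intro α β β' β'' h h' x
    apply Subtype.ext
    simp [LinearMap.restrict_apply, BidirectSystem.π_comp]
  square := by
    intro α α' h β β' h' x
    apply Subtype.ext
    simp [LinearMap.restrict_apply, BidirectSystem.square]

/-- The bidirect system of cokernels `coKer_β^α = colim_α G_β^α ⧸ im (κ_β^α)`. -/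
noncomputable def cokerSystem (T : BidirectSystem) : BidirectSystem where
  G α β := T.colimUpper β ⧸ LinearMap.range (T.toColim α β)
  ι {α α'} h β :=
    Submodule.mapQ _ _ LinearMap.id (by
      rintro x ⟨y, rfl⟩
      simp only [Submodule.mem_comap, LinearMap.id_apply, LinearMap.mem_range]
      exact ⟨T.ι h β y, Module.DirectLimit.of_f⟩)
  π α {β β'} h :=
    Submodule.mapQ _ _ (T.colimUpperMap h) (by
      rintro x ⟨y, rfl⟩
      simp only [Submodule.mem_comap, LinearMap.mem_range]
      exact ⟨T.π α h y, (T.colimUpperMap_of h y).symm⟩)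
  ι_id := by
    intro α β x
    obtain ⟨y, rfl⟩ := Submodule.Quotient.mk_surjective _ x
    simp [Submodule.mapQ_apply]
  ι_comp := by
    intro α α' α'' h h' β x
    obtain ⟨y, rfl⟩ := Submodule.Quotient.mk_surjective _ x
    simp [Submodule.mapQ_apply]
  π_id := by
    intro α β x
    obtain ⟨y, rfl⟩ := Submodule.Quotient.mk_surjective _ x
    simp [Submodule.mapQ_apply, T.colimUpperMap_id]
  π_comp := by
    intro α β β' β'' h h' x
    obtain ⟨y, rfl⟩ := Submodule.Quotient.mk_surjective _ x
    simp [Submodule.mapQ_apply, T.colimUpperMap_comp]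
  square := by
    intro α α' h β β' h' x
    obtain ⟨y, rfl⟩ := Submodule.Quotient.mk_surjective _ x
    simp [Submodule.mapQ_apply]

end BidirectSystem

/-! Injectivity of the first map and exactness at `colim_α lim_β G` hold at each level `α`, since
`lim_β Ker^α` is the kernel of `lim_β G^α → lim_β colim_α G`, and pass to the colimit over `α`.
Exactness at `lim_β colim_α G` and surjectivity onto `colim_α lim_β coKer` both amount to lifting a
coherent family along a map of towers with finite-dimensional kernels (`Ker_β^α`, resp. the image
of `G_β^α` in `colim_α G_β^α`). The fibres over the family form a tower of nonempty affine
subspaces with finite-dimensional directions; their iterated images decrease and stabilise by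
dimension (Mittag-Leffler), and the stable images map onto each other, so a coherent section can
be chosen through them. -/

open Function LinearMap

theorem Set.exists_seq_of_surjOn {X : ℕ → Type*} (S : ∀ n, Set (X n))
    (f : ∀ n, X (n + 1) → X n) (h₀ : (S 0).Nonempty) (hf : ∀ n, SurjOn (f n) (S (n + 1)) (S n)) :
    ∃ x : ∀ n, X n, (∀ n, x n ∈ S n) ∧ ∀ n, f n (x (n + 1)) = x n := by
  choose y hyS hy using fun n (x : S n) => hf n x.2
  let x : ∀ n, S n := fun n => Nat.rec ⟨h₀.some, h₀.some_mem⟩ (fun n xn => ⟨y n xn, hyS n xn⟩) n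
  exact ⟨fun n => (x n).1, fun n => (x n).2, fun n => hy n (x n)⟩

namespace AffineSubspace

variable {k : Type*} [DivisionRing k]

theorem exists_eventually_eq_of_antitone {V P : Type*} [AddCommGroup V] [Module k V]
    [AddTorsor V P] (s : ℕ → AffineSubspace k P) (hs : Antitone s)
    (hne : ∀ n, (s n : Set P).Nonempty) [FiniteDimensional k (s 0).direction] :
    ∃ N, ∀ n ≥ N, s n = s N := by
  set N := argmin fun n => Module.finrank k (s n).direction
  refine ⟨N, fun n hn => eq_of_direction_eq_of_nonempty_of_le ?_ (hne n) (hs hn)⟩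
  have : FiniteDimensional k (s N).direction :=
    Submodule.finiteDimensional_of_le (direction_le (hs N.zero_le))
  exact Submodule.eq_of_le_of_finrank_le (direction_le (hs hn))
    (argmin_le (fun n => Module.finrank k (s n).direction) n)

theorem exists_coherent_seq_mem_of_map_le {V : ℕ → Type*} [∀ n, AddCommGroup (V n)]
    [∀ n, Module k (V n)] (p : ∀ n, V (n + 1) →ₗ[k] V n) (F : ∀ n, AffineSubspace k (V n))
    (hne : ∀ n, (F n : Set (V n)).Nonempty) [∀ n, FiniteDimensional k (F n).direction]
    (hF : ∀ n, (F (n + 1)).map (p n).toAffineMap ≤ F n) :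
    ∃ v : ∀ n, V n, (∀ n, v n ∈ F n) ∧ ∀ n, p n (v (n + 1)) = v n := by
  -- `Φ j n` is the image of `F (n + j)` in `V n`.
  obtain ⟨Φ, Φ_zero, Φ_succ⟩ : ∃ Φ : ℕ → ∀ n, AffineSubspace k (V n), Φ 0 = F ∧
      ∀ j n, Φ (j + 1) n = (Φ j (n + 1)).map (p n).toAffineMap :=
    ⟨fun j => Nat.rec F (fun _ Ψ n => (Ψ (n + 1)).map (p n).toAffineMap) j, rfl, fun _ _ => rfl⟩
  subst Φ_zero
  have Φ_anti (n : ℕ) : Antitone (Φ · n) := by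
    refine antitone_nat_of_succ_le fun j => ?_
    induction j generalizing n with
    | zero => rw [Φ_succ]; exact hF n
    | succ j ih =>
      rw [Φ_succ (j + 1) n, Φ_succ j n]
      exact map_mono (p n).toAffineMap (ih (n + 1))
  have Φ_ne (j n : ℕ) : (Φ j n : Set (V n)).Nonempty := by
    induction j generalizing n with
    | zero => exact hne n
    | succ j ih => rw [Φ_succ, coe_map]; exact (ih (n + 1)).image _
  choose N hN using fun n => exists_eventually_eq_of_antitone (Φ · n) (Φ_anti n) (Φ_ne · n)
  have surjOn_stable (n : ℕ) : Set.SurjOn (p n) (Φ (N (n + 1)) (n + 1)) (Φ (N n) n) := by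
    set j := max (N (n + 1)) (N n)
    rw [Set.SurjOn, ← hN n (j + 1) (by omega), Φ_succ, coe_map, hN (n + 1) j (le_max_left _ _)]
    rfl
  obtain ⟨v, hvΦ, hv⟩ := Set.exists_seq_of_surjOn (fun n => (Φ (N n) n : Set (V n)))
    (fun n => p n) (Φ_ne _ _) surjOn_stable
  exact ⟨v, fun n => Φ_anti n (Nat.zero_le _) (hvΦ n), hv⟩

end AffineSubspace

namespace InverseSystem

theorem exists_coherent_of_nat {A : ℤ → Type*} (f : ∀ ⦃i j : ℤ⦄, i ≤ j → A j → A i)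
    [InverseSystem f] (x : ∀ n : ℕ, A n)
    (hx : ∀ (n : ℕ) (h : (n : ℤ) ≤ (n + 1 : ℕ)), f h (x (n + 1)) = x n) :
    ∃ a : ∀ i, A i, (∀ ⦃i j⦄ (h : i ≤ j), f h (a j) = a i) ∧ ∀ n : ℕ, a n = x n := by
  have hx_le (m n : ℕ) (h : (m : ℤ) ≤ n) : f h (x n) = x m := by
    induction n, Int.ofNat_le.1 h using Nat.le_induction with
    | base => exact map_self _
    | succ n hmn ih => rw [← map_map (f := f) (Int.ofNat_le.2 hmn) (by omega), hx n, ih]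
  refine ⟨fun i => f (Int.self_le_toNat i) (x i.toNat), fun i j h => ?_, fun n => hx_le n n le_rfl⟩
  beta_reduce
  rw [map_map (f := f), ← hx_le i.toNat j.toNat (by omega), map_map (f := f)]

theorem exists_coherent_lift {K : Type*} [DivisionRing K] {A B : ℤ → Type*}
    [∀ i, AddCommGroup (A i)] [∀ i, Module K (A i)] [∀ i, AddCommGroup (B i)]
    [∀ i, Module K (B i)] (f : ∀ ⦃i j : ℤ⦄, i ≤ j → A j →ₗ[K] A i)
    [InverseSystem fun _ _ h => f h] (g : ∀ ⦃i j : ℤ⦄, i ≤ j → B j →ₗ[K] B i)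
    (φ : ∀ i, A i →ₗ[K] B i) (hφ : ∀ ⦃i j⦄ (h : i ≤ j) (x : A j), φ i (f h x) = g h (φ j x))
    [∀ i, FiniteDimensional K (ker (φ i))] (b : ∀ i, B i)
    (hb : ∀ ⦃i j⦄ (h : i ≤ j), g h (b j) = b i) (hbφ : ∀ i, b i ∈ range (φ i)) :
    ∃ a : ∀ i, A i, (∀ ⦃i j⦄ (h : i ≤ j), f h (a j) = a i) ∧ ∀ i, φ i (a i) = b i := by
  choose a₀ ha₀ using hbφ
  have mem_fiber (i : ℤ) (x : A i) :
      x ∈ AffineSubspace.mk' (a₀ i) (ker (φ i)) ↔ φ i x = b i := by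
    rw [AffineSubspace.mem_mk', vsub_eq_sub, mem_ker, map_sub, sub_eq_zero, ha₀]
  have (n : ℕ) : FiniteDimensional K (AffineSubspace.mk' (a₀ n) (ker (φ n))).direction := by
    rw [AffineSubspace.direction_mk']
    infer_instance
  have fiber_map_le (n : ℕ) : (AffineSubspace.mk' (a₀ (n + 1 : ℕ)) (ker (φ (n + 1 : ℕ)))).map
      (f (by omega : (n : ℤ) ≤ (n + 1 : ℕ))).toAffineMap ≤ .mk' (a₀ n) (ker (φ n)) := by
    intro y hy
    obtain ⟨x, hx, rfl⟩ := AffineSubspace.mem_map.1 hy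
    rw [mem_fiber] at hx ⊢
    rw [coe_toAffineMap, hφ, hx, hb]
  obtain ⟨v, hv_mem, hv⟩ := AffineSubspace.exists_coherent_seq_mem_of_map_le
    (V := fun n : ℕ => A n) (fun n => f (by omega)) (fun n => .mk' (a₀ n) (ker (φ n)))
    (fun n => ⟨a₀ n, AffineSubspace.self_mem_mk' _ _⟩) fiber_map_le
  obtain ⟨a, ha, hav⟩ := exists_coherent_of_nat (fun _ _ h => f h) v (fun n _ => hv n)
  refine ⟨a, ha, fun i => ?_⟩
  rw [← ha (Int.self_le_toNat i), hφ, hav, (mem_fiber _ _).1 (hv_mem _), hb]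

end InverseSystem

namespace Module.DirectLimit

variable {R ι : Type*} [Ring R] [Preorder ι] [DecidableEq ι] [Nonempty ι] [IsDirectedOrder ι]
  {G G' : ι → Type*} [∀ i, AddCommGroup (G i)] [∀ i, Module R (G i)]
  [∀ i, AddCommGroup (G' i)] [∀ i, Module R (G' i)]
  {f : ∀ i j, i ≤ j → G i →ₗ[R] G j} {f' : ∀ i j, i ≤ j → G' i →ₗ[R] G' j}
  (g : ∀ i, G i →ₗ[R] G' i) (hg : ∀ i j h, g j ∘ₗ f i j h = f' i j h ∘ₗ g i)

theorem map_injective [DirectedSystem G' (f' · · ·)] (hinj : ∀ i, Function.Injective (g i)) :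
    Function.Injective (map g hg) := by
  refine (injective_iff_map_eq_zero _).2 fun z hz => ?_
  induction z using DirectLimit.induction_on with | ih i x
  rw [map_apply_of] at hz
  obtain ⟨j, hij, hj⟩ := of.zero_exact hz
  have hx : f i j hij x = 0 :=
    hinj j (by rw [← LinearMap.comp_apply, hg, LinearMap.comp_apply, hj, map_zero])
  rw [← of_f (hij := hij), hx, map_zero]

theorem exact_map_lift {P : Type*} [AddCommGroup P] [Module R P] (ψ : ∀ i, G' i →ₗ[R] P)
    (hψ : ∀ i j h x, ψ j (f' i j h x) = ψ i x) (hexact : ∀ i, Function.Exact (g i) (ψ i)) :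
    Function.Exact (map g hg) (lift R ι G' f' ψ hψ) := by
  intro y
  constructor
  · induction y using DirectLimit.induction_on with | ih i x
    intro hx
    rw [lift_of] at hx
    obtain ⟨z, rfl⟩ := ((hexact i) x).1 hx
    exact ⟨of R ι G f i z, map_apply_of g hg z⟩
  · rintro ⟨z, rfl⟩
    induction z using DirectLimit.induction_on with | ih i z
    rw [map_apply_of, lift_of, (hexact i).apply_apply_eq_zero]

end Module.DirectLimit

namespace BidirectSystem

variable (S : BidirectSystem)

instance (α : ℤ) : InverseSystem fun _ _ h => S.π α h :=
  ⟨S.π_id α, fun _ _ _ => S.π_comp α⟩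

instance : InverseSystem fun _ _ h => S.colimUpperMap h :=
  ⟨S.colimUpperMap_id, fun _ _ _ => S.colimUpperMap_comp⟩

instance : DirectedSystem (fun α => S.lowerLim α) (fun _ _ h => S.lowerLimMap h) where
  map_self _ _ := Subtype.ext <| funext fun _ => S.ι_id _ _ _
  map_map _ _ _ _ _ _ := Subtype.ext <| funext fun _ => S.ι_comp _ _ _ _

lemma kappa_of (α : ℤ) (g : S.lowerLim α) :
    S.kappa (Module.DirectLimit.of ℂ ℤ _ _ α g) = S.lowerLimToLimColim α g :=
  Module.DirectLimit.lift_of _ _ _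

noncomputable def lowerLimKerToLowerLim (α : ℤ) :
    (kerSystem S).lowerLim α →ₗ[ℂ] S.lowerLim α where
  toFun g := ⟨fun β => (g.1 β).1, fun β β' h => congrArg Subtype.val (g.2 β β' h)⟩
  map_add' _ _ := rfl
  map_smul' _ _ := rfl

lemma lowerLimKerToLowerLim_injective (α : ℤ) : Injective (S.lowerLimKerToLowerLim α) :=
  fun _ _ h => Subtype.ext <| funext fun β => Subtype.ext <| congrFun (congrArg Subtype.val h) β

lemma exact_lowerLimKerToLowerLim_lowerLimToLimColim (α : ℤ) :
    Exact (S.lowerLimKerToLowerLim α) (S.lowerLimToLimColim α) := by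
  intro g
  constructor
  · intro hg
    have hker (β : ℤ) : g.1 β ∈ ker (S.toColim α β) := congrFun (congrArg Subtype.val hg) β
    exact ⟨⟨fun β => ⟨g.1 β, hker β⟩, fun β β' h => Subtype.ext (g.2 β β' h)⟩, rfl⟩
  · rintro ⟨g, rfl⟩
    exact Subtype.ext <| funext fun β => (g.1 β).2

noncomputable def colimLimKerToColimLim : colimLim (kerSystem S) →ₗ[ℂ] colimLim S :=
  Module.DirectLimit.map (fun α => S.lowerLimKerToLowerLim α) fun _ _ _ => rfl

lemma colimLimKerToColimLim_injective : Injective S.colimLimKerToColimLim :=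
  Module.DirectLimit.map_injective _ _ S.lowerLimKerToLowerLim_injective

lemma exact_colimLimKerToColimLim_kappa : Exact S.colimLimKerToColimLim S.kappa :=
  Module.DirectLimit.exact_map_lift _ _ _ _ S.exact_lowerLimKerToLowerLim_lowerLimToLimColim

noncomputable def limColimToLowerLimCoker (α : ℤ) :
    S.limColim →ₗ[ℂ] (cokerSystem S).lowerLim α where
  toFun y := ⟨fun β => Submodule.Quotient.mk (y.1 β), fun β β' h => by
    change Submodule.Quotient.mk (S.colimUpperMap h (y.1 β')) = _
    rw [y.2 β β' h]⟩
  map_add' _ _ := rfl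
  map_smul' _ _ := rfl

noncomputable def limColimToColimLimCoker : S.limColim →ₗ[ℂ] colimLim (cokerSystem S) :=
  (Module.DirectLimit.of ℂ ℤ _ _ 0).comp (S.limColimToLowerLimCoker 0)

variable {S}

lemma limColimToLowerLimCoker_eq_zero_iff {α : ℤ} {y : S.limColim} :
    S.limColimToLowerLimCoker α y = 0 ↔ ∀ β, y.1 β ∈ range (S.toColim α β) := by
  simp only [Subtype.ext_iff, funext_iff]
  exact forall_congr' fun β => Submodule.Quotient.mk_eq_zero _

lemma limColimToColimLimCoker_apply (α : ℤ) (y : S.limColim) :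
    S.limColimToColimLimCoker y =
      Module.DirectLimit.of ℂ ℤ _ _ α (S.limColimToLowerLimCoker α y) := by
  change Module.DirectLimit.of ℂ ℤ (fun α => (cokerSystem S).lowerLim α)
    (fun _ _ h => (cokerSystem S).lowerLimMap h) 0 (S.limColimToLowerLimCoker 0 y) = _
  rw [← Module.DirectLimit.of_f (hij := le_max_left 0 α),
    ← Module.DirectLimit.of_f (hij := le_max_right 0 α)]
  rfl

lemma exists_lowerLimToLimColim_eq {α : ℤ} [∀ β, FiniteDimensional ℂ (S.G α β)]
    (y : S.limColim) (hy : ∀ β, y.1 β ∈ range (S.toColim α β)) :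
    ∃ x, S.lowerLimToLimColim α x = y := by
  obtain ⟨x, hx, hxy⟩ := InverseSystem.exists_coherent_lift (fun _ _ h => S.π α h)
    (fun _ _ h => S.colimUpperMap h) (fun β => S.toColim α β)
    (fun _ _ h x => (S.colimUpperMap_of h x).symm) y.1 y.2 hy
  exact ⟨⟨x, hx⟩, Subtype.ext (funext hxy)⟩

lemma limColimToLowerLimCoker_surjective (α : ℤ) [∀ β, FiniteDimensional ℂ (S.G α β)] :
    Surjective (S.limColimToLowerLimCoker α) := by
  intro c
  have (β : ℤ) : FiniteDimensional ℂ (ker (range (S.toColim α β)).mkQ) := by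
    rw [Submodule.ker_mkQ]
    exact finiteDimensional_range _
  obtain ⟨y, hy, hyc⟩ := InverseSystem.exists_coherent_lift
    (B := fun β => S.colimUpper β ⧸ range (S.toColim α β))
    (fun _ _ h => S.colimUpperMap h) (fun _ _ h => (cokerSystem S).π α h)
    (fun β => (range (S.toColim α β)).mkQ) (fun _ _ _ _ => rfl) c.1 c.2
    (fun β => Submodule.mkQ_surjective _ (c.1 β))
  exact ⟨⟨y, hy⟩, Subtype.ext (funext hyc)⟩

lemma exact_kappa_limColimToColimLimCoker [∀ α β, FiniteDimensional ℂ (S.G α β)] :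
    Exact S.kappa S.limColimToColimLimCoker := by
  intro y
  constructor
  · intro hy
    obtain ⟨α, _, hα⟩ := Module.DirectLimit.of.zero_exact hy
    change S.limColimToLowerLimCoker α y = 0 at hα
    obtain ⟨x, rfl⟩ := exists_lowerLimToLimColim_eq y (limColimToLowerLimCoker_eq_zero_iff.1 hα)
    exact ⟨_, S.kappa_of α x⟩
  · rintro ⟨z, rfl⟩
    induction z using Module.DirectLimit.induction_on with | ih α g
    rw [kappa_of, limColimToColimLimCoker_apply α,
      limColimToLowerLimCoker_eq_zero_iff.2 fun β => ⟨g.1 β, rfl⟩]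
    exact map_zero _

lemma limColimToColimLimCoker_surjective [∀ α β, FiniteDimensional ℂ (S.G α β)] :
    Surjective S.limColimToColimLimCoker := by
  intro z
  induction z using Module.DirectLimit.induction_on with | ih α c
  obtain ⟨y, rfl⟩ := limColimToLowerLimCoker_surjective α c
  exact ⟨y, limColimToColimLimCoker_apply α y⟩

end BidirectSystem

open BidirectSystem in
/-- For a bidirect system `{G_β^α}` of complex vector spaces indexed by `ℤ`
with `dim_ℂ G_β^α ≤ C` for a constant `C` independent of `α, β`, there is an exact sequence
`0 → colim_α lim_β Ker → colim_α lim_β G → lim_β colim_α G → colim_α lim_β coKer → 0`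
in which the middle map is the canonical interchange map `κ`. -/
theorem four_term_exact_sequence (S : BidirectSystem) (C : ℕ)
    (hdim : ∀ α β : ℤ, Module.rank ℂ (S.G α β) ≤ (C : Cardinal)) :
    ∃ (e₁ : colimLim (kerSystem S) →ₗ[ℂ] colimLim S)
      (e₃ : S.limColim →ₗ[ℂ] colimLim (cokerSystem S)),
      Function.Injective e₁ ∧
      Function.Exact e₁ S.kappa ∧
      Function.Exact S.kappa e₃ ∧
      Function.Surjective e₃ := by
  have (α β : ℤ) : FiniteDimensional ℂ (S.G α β) :=
    Module.rank_lt_aleph0_iff.1 ((hdim α β).trans_lt Cardinal.natCast_lt_aleph0)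
  exact ⟨S.colimLimKerToColimLim, S.limColimToColimLimCoker,
    S.colimLimKerToColimLim_injective, S.exact_colimLimKerToColimLim_kappa,
    exact_kappa_limColimToColimLimCoker, limColimToColimLimCoker_surjective⟩
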